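/- arXiv:1311.3736 — 4 statements merged into one kernel-verified Lean document; each statement's English description precedes it below -/
import Mathlib

section
/- Define, for odd i and k ≥ 2, m_k(i) = i - 1 + 2^(k-2) if i mod 2^(k-1) ∈ [1, 2^(k-2)], and m_k(i) = i - 1 - 2^(k-2) otherwise; and m_1(i) = i - 1. Let S_o (resp. S_e) be the set of odd i such that i - 1 is a sum of an odd (resp. even) number of distinct powers of 2 with exponents ≥ 1. Then for every i ∈ S_e and distinct k, k' ≥ 3, there exists i' ∈ S_e with m_{k'}(i') = m_k(i). -/
/-- m_k(i) = i - 1 + 2^(k-2) if i mod 2^(k-1) ∈ [1, 2^(k-2)], and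
m_k(i) = i - 1 - 2^(k-2) otherwise; m_1(i) = i - 1 (as integers). -/
def adinkraM (k i : ℕ) : ℤ :=
  if k = 1 then (i : ℤ) - 1
  else if 1 ≤ i % 2 ^ (k - 1) ∧ i % 2 ^ (k - 1) ≤ 2 ^ (k - 2) then
    (i : ℤ) - 1 + 2 ^ (k - 2)
  else (i : ℤ) - 1 - 2 ^ (k - 2)

/-- S_o: odd i such that i-1 is a sum of an odd number of distinct powers of 2
with exponents ≥ 1 (i.e. i-1 has an odd number of 1s in binary). -/
def adinkraSo (i : ℕ) : Prop := Odd i ∧ Odd (((i - 1).bits).count true)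

/-- S_e: odd i such that i-1 is a sum of an even number of distinct powers of 2
with exponents ≥ 1. -/
def adinkraSe (i : ℕ) : Prop := Odd i ∧ Even (((i - 1).bits).count true)

/-! For odd `i` and `k ≥ 2`, `m_k(i)` is `i - 1` with its bit `k - 2` toggled: the condition
`i mod 2^(k-1) ∈ [1, 2^(k-2)]` says exactly that this bit of the even number `i - 1` is `0`.
So take `i' - 1` to be `i - 1` with bits `k - 2` and `k' - 2` toggled: toggling bit `k' - 2` once
more gives `m_k(i)`, and toggling two bits of positive index keeps `i'` odd and preserves the
parity of the number of binary digits `1`. -/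

namespace Nat

theorem xor_two_pow_eq_two_pow_mul_add (j n : ℕ) :
    j ^^^ 2 ^ n = 2 ^ n * (j / 2 ^ n ^^^ 1) + j % 2 ^ n := by
  have hdiv : (j ^^^ 2 ^ n) / 2 ^ n = j / 2 ^ n ^^^ 1 := by
    rw [xor_div_two_pow, Nat.div_self (Nat.two_pow_pos n)]
  have hmod : (j ^^^ 2 ^ n) % 2 ^ n = j % 2 ^ n := by
    rw [xor_mod_two_pow, Nat.mod_self, Nat.xor_zero]
  rw [← hdiv, ← hmod, Nat.div_add_mod]

theorem cast_xor_one (q : ℕ) : ((q ^^^ 1 : ℕ) : ℤ) = q + if q % 2 = 1 then -1 else 1 := by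
  have hdiv : (q ^^^ 1) / 2 = q / 2 := by rw [xor_div_two]; simp
  have hmod : (q ^^^ 1) % 2 = (q + 1) % 2 := xor_mod_two_eq
  have := Nat.div_add_mod (q ^^^ 1) 2
  have := Nat.div_add_mod q 2
  split_ifs <;> omega

theorem cast_xor_two_pow (j n : ℕ) :
    ((j ^^^ 2 ^ n : ℕ) : ℤ) = j + if j.testBit n then -2 ^ n else 2 ^ n := by
  have hj : (j : ℤ) = 2 ^ n * ((j / 2 ^ n : ℕ) : ℤ) + ((j % 2 ^ n : ℕ) : ℤ) := by
    exact_mod_cast (Nat.div_add_mod j (2 ^ n)).symm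
  rw [xor_two_pow_eq_two_pow_mul_add, testBit_eq_decide_div_mod_eq, hj, Nat.cast_add,
    Nat.cast_mul, cast_xor_one]
  by_cases h : j / 2 ^ n % 2 = 1 <;> simp only [h, decide_true, decide_false] <;> push_cast <;> ring

theorem testBit_eq_false_iff_mod_lt {j n : ℕ} :
    j.testBit n = false ↔ j % 2 ^ (n + 1) < 2 ^ n := by
  have hlt : j % 2 ^ (n + 1) < 2 ^ (n + 1) := Nat.mod_lt _ (Nat.two_pow_pos _)
  have hbit : (j % 2 ^ (n + 1)).testBit n = j.testBit n := by simp
  rw [← hbit]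
  constructor
  · intro h
    by_contra hle
    rw [testBit_of_two_pow_le_and_two_pow_add_one_gt (not_lt.mp hle) hlt] at h
    exact Bool.noConfusion h
  · exact testBit_lt_two_pow

theorem count_true_bits_eq_mod_two_add (n : ℕ) :
    n.bits.count true = n % 2 + (n / 2).bits.count true := by
  obtain ⟨m, rfl | rfl⟩ := n.even_or_odd'
  · rcases eq_or_ne m 0 with rfl | hm
    · simp
    · simp [bit0_bits m hm]
  · simp [bit1_bits, show (2 * m + 1) / 2 = m by omega]
    omega

theorem count_true_bits_xor_mod_two (m n : ℕ) :
    (m ^^^ n).bits.count true % 2 = (m.bits.count true + n.bits.count true) % 2 := by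
  induction m using Nat.strong_induction_on generalizing n with
  | _ m ih =>
    rcases eq_or_ne m 0 with rfl | hm
    · simp
    have := ih (m / 2) (by omega) (n / 2)
    have := xor_mod_two_eq (m := m) (n := n)
    rw [count_true_bits_eq_mod_two_add (m ^^^ n), count_true_bits_eq_mod_two_add m,
      count_true_bits_eq_mod_two_add n, xor_div_two]
    omega

theorem count_true_bits_two_pow (n : ℕ) : (2 ^ n).bits.count true = 1 := by
  induction n with
  | zero => simp [one_bits]
  | succ n ih => rw [pow_succ', bit0_bits _ (by positivity), List.count_cons_of_ne (by simp), ih]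

end Nat

theorem adinkraM_eq_xor {k i : ℕ} (hk : 2 ≤ k) (hi : Odd i) :
    adinkraM k i = (((i - 1) ^^^ 2 ^ (k - 2) : ℕ) : ℤ) := by
  obtain ⟨n, rfl⟩ : ∃ n, k = n + 2 := ⟨k - 2, by omega⟩
  have hodd : i % 2 ^ (n + 1) % 2 = 1 := by
    rw [Nat.mod_mod_of_dvd _ (dvd_pow_self 2 n.succ_ne_zero)]
    exact Nat.odd_iff.mp hi
  have hpred : (i - 1) % 2 ^ (n + 1) = i % 2 ^ (n + 1) - 1 := by
    have hlt := Nat.mod_lt i (Nat.two_pow_pos (n + 1))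
    conv_lhs => rw [← Nat.div_add_mod i (2 ^ (n + 1))]
    rw [Nat.add_sub_assoc (by omega), Nat.mul_add_mod, Nat.mod_eq_of_lt (by omega)]
  have hcond : (1 ≤ i % 2 ^ (n + 1) ∧ i % 2 ^ (n + 1) ≤ 2 ^ n) ↔ (i - 1).testBit n = false := by
    rw [Nat.testBit_eq_false_iff_mod_lt, hpred]
    omega
  rw [adinkraM, if_neg (by omega), Nat.add_sub_cancel, Nat.add_succ_sub_one, Nat.cast_xor_two_pow,
    Nat.cast_sub hi.pos]
  by_cases hb : (i - 1).testBit n <;> simp [hb, hcond]; ring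

theorem adinkraSe_xor_two_pow_xor_two_pow {i a b : ℕ} (hi : adinkraSe i) (ha : a ≠ 0)
    (hb : b ≠ 0) : adinkraSe (((i - 1) ^^^ 2 ^ a ^^^ 2 ^ b) + 1) := by
  obtain ⟨hodd, heven⟩ := hi
  rw [adinkraSe, Nat.add_sub_cancel]
  constructor
  · have hi2 := Nat.odd_iff.mp hodd
    have ha2 := Nat.two_pow_mod_two_eq_zero.mpr (Nat.pos_of_ne_zero ha)
    have hb2 := Nat.two_pow_mod_two_eq_zero.mpr (Nat.pos_of_ne_zero hb)
    have hxa := Nat.xor_mod_two_eq (m := i - 1) (n := 2 ^ a)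
    have hxb := Nat.xor_mod_two_eq (m := (i - 1) ^^^ 2 ^ a) (n := 2 ^ b)
    rw [Nat.odd_iff]
    omega
  · have hca := Nat.count_true_bits_xor_mod_two (i - 1) (2 ^ a)
    have hcb := Nat.count_true_bits_xor_mod_two ((i - 1) ^^^ 2 ^ a) (2 ^ b)
    rw [Nat.count_true_bits_two_pow] at hca hcb
    rw [Nat.even_iff] at heven ⊢
    omega

theorem stmt4_general (i k k' : ℕ) (hi : adinkraSe i) (hk : 3 ≤ k) (hk' : 3 ≤ k') :
    ∃ i', adinkraSe i' ∧ adinkraM k' i' = adinkraM k i := by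
  have hi' := adinkraSe_xor_two_pow_xor_two_pow hi (a := k - 2) (b := k' - 2) (by omega) (by omega)
  refine ⟨_, hi', ?_⟩
  rw [adinkraM_eq_xor (by omega) hi'.1, adinkraM_eq_xor (by omega) hi.1, Nat.add_sub_cancel,
    Nat.xor_assoc, Nat.xor_self, Nat.xor_zero]

/-- For every i ∈ S_e and distinct k, k' ≥ 3 there exists i' ∈ S_e with
m_{k'}(i') = m_k(i). -/
theorem stmt4 (i k k' : ℕ) (hi : adinkraSe i) (hk : 3 ≤ k) (hk' : 3 ≤ k')
    (hne : k ≠ k') :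
    ∃ i', adinkraSe i' ∧ adinkraM k' i' = adinkraM k i :=
  stmt4_general i k k' hi hk hk'
end

section
/- With notation as above, for any fixed k ≥ 3, the set {m_1(i) : i ∈ S_o} equals the set {m_k(i) : i ∈ S_e}, where m_1(i) = i - 1 and m_k(i) = i - 1 ± 2^(k-2) with sign + exactly when bit k-2 of i-1 is 0. -/
/-- m_1(i) = i - 1. -/
def adinkraM1 (i : ℕ) : ℤ := (i : ℤ) - 1

/-- m_k(i) = i - 1 ± 2^(k-2), with sign + exactly when bit k-2 of i-1 is 0. -/
def adinkraMbit (k i : ℕ) : ℤ :=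
  if Nat.testBit (i - 1) (k - 2) = false then (i : ℤ) - 1 + 2 ^ (k - 2)
  else (i : ℤ) - 1 - 2 ^ (k - 2)

/-!
Write `t = i - 1` and `b = k - 2 ≥ 1`. Toggling bit `b` of `t`, i.e. `t ↦ t ^^^ 2 ^ b`, is an
involution that changes the number of 1 bits by one and changes the value by `+2 ^ b` or `-2 ^ b`
according as bit `b` of `t` was `0` or `1`; since `b ≥ 1` it keeps `t` even. Hence
`flip i := (i - 1) ^^^ 2 ^ b + 1` swaps `S_o` and `S_e` and satisfies `m_1 (flip i) = m_k i`,
which gives both inclusions.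
-/

namespace Nat

lemma count_true_bits_bit (c : Bool) (n : ℕ) :
    (bit c n).bits.count true = n.bits.count true + c.toNat := by
  cases c
  · rcases eq_or_ne n 0 with rfl | hn
    · simp
    · simp [bit_val, bit0_bits n hn]
  · simp [bit_val, bit1_bits]

lemma bit_xor_one (c : Bool) (n : ℕ) : bit c n ^^^ 1 = bit (!c) n := by
  simpa using xor_bit c n true 0

lemma bit_xor_two_pow_succ (c : Bool) (n b : ℕ) :
    bit c n ^^^ 2 ^ (b + 1) = bit c (n ^^^ 2 ^ b) := by
  have h : 2 ^ (b + 1) = bit false (2 ^ b) := by rw [bit_val, Bool.toNat_false]; ring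
  simpa [h] using xor_bit c n false (2 ^ b)

lemma xor_two_pow_add_two_pow_succ_mul (t b : ℕ) :
    (t ^^^ 2 ^ b) + 2 ^ (b + 1) * (t.testBit b).toNat = t + 2 ^ b := by
  induction b generalizing t with
  | zero =>
    obtain ⟨c, n, rfl⟩ : ∃ c n, bit c n = t := ⟨_, _, bit_bodd_div2 t⟩
    rw [Nat.pow_zero, bit_xor_one, testBit_bit_zero]
    cases c <;> simp only [bit_val, Bool.not_false, Bool.not_true, Bool.toNat_false,
      Bool.toNat_true] <;> ring
  | succ b ih =>
    obtain ⟨c, n, rfl⟩ : ∃ c n, bit c n = t := ⟨_, _, bit_bodd_div2 t⟩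
    have := ih n
    rw [bit_xor_two_pow_succ, ← succ_eq_add_one, testBit_bit_succ]
    simp only [bit_val, pow_succ] at this ⊢
    linarith

lemma count_true_bits_xor_two_pow (t b : ℕ) :
    (t ^^^ 2 ^ b).bits.count true + (t.testBit b).toNat =
      t.bits.count true + (!t.testBit b).toNat := by
  induction b generalizing t with
  | zero =>
    obtain ⟨c, n, rfl⟩ : ∃ c n, bit c n = t := ⟨_, _, bit_bodd_div2 t⟩
    rw [Nat.pow_zero, bit_xor_one, testBit_bit_zero, count_true_bits_bit, count_true_bits_bit]
    omega
  | succ b ih =>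
    obtain ⟨c, n, rfl⟩ : ∃ c n, bit c n = t := ⟨_, _, bit_bodd_div2 t⟩
    rw [bit_xor_two_pow_succ, ← succ_eq_add_one, testBit_bit_succ, count_true_bits_bit,
      count_true_bits_bit]
    have := ih n
    omega

lemma even_count_true_bits_xor_two_pow_iff (t b : ℕ) :
    Even ((t ^^^ 2 ^ b).bits.count true) ↔ Odd (t.bits.count true) := by
  have h := count_true_bits_xor_two_pow t b
  rw [even_iff, odd_iff]
  generalize t.testBit b = c at h
  cases c <;> simp only [Bool.toNat_false, Bool.toNat_true, Bool.not_false, Bool.not_true] at h <;>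
    omega

lemma even_xor_two_pow {t : ℕ} (ht : Even t) {b : ℕ} (hb : b ≠ 0) : Even (t ^^^ 2 ^ b) :=
  even_xor.mpr ⟨fun _ => (even_pow' hb).mpr even_two, fun _ => ht⟩

end Nat

def adinkraFlip (b i : ℕ) : ℕ := ((i - 1) ^^^ 2 ^ b) + 1

lemma adinkraFlip_adinkraFlip {i : ℕ} (hi : 1 ≤ i) (b : ℕ) :
    adinkraFlip b (adinkraFlip b i) = i := by
  rw [adinkraFlip, adinkraFlip, Nat.add_sub_cancel, Nat.xor_assoc, Nat.xor_self, Nat.xor_zero]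
  omega

lemma adinkraM1_adinkraFlip (k : ℕ) {i : ℕ} (hi : 1 ≤ i) :
    adinkraM1 (adinkraFlip (k - 2) i) = adinkraMbit k i := by
  have h := Nat.xor_two_pow_add_two_pow_succ_mul (i - 1) (k - 2)
  rw [pow_succ] at h
  rw [adinkraM1, adinkraFlip, adinkraMbit]
  generalize (i - 1).testBit (k - 2) = c at h ⊢
  cases c <;> simp only [Bool.toNat_false, Bool.toNat_true] at h <;> zify [hi] at h <;>
    simp only [Nat.cast_add, Nat.cast_one, add_sub_cancel_right, Bool.true_eq_false,
      ↓reduceIte] <;> linarith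

lemma odd_adinkraFlip {b i : ℕ} (hb : b ≠ 0) (hi : Odd i) : Odd (adinkraFlip b i) :=
  (Nat.even_xor_two_pow (Nat.Odd.sub_odd hi odd_one) hb).add_one

lemma adinkraSe_adinkraFlip {b i : ℕ} (hb : b ≠ 0) (hi : adinkraSo i) :
    adinkraSe (adinkraFlip b i) :=
  ⟨odd_adinkraFlip hb hi.1, by
    simpa [adinkraFlip] using (Nat.even_count_true_bits_xor_two_pow_iff _ _).2 hi.2⟩

lemma adinkraSo_adinkraFlip {b i : ℕ} (hb : b ≠ 0) (hi : adinkraSe i) :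
    adinkraSo (adinkraFlip b i) := by
  refine ⟨odd_adinkraFlip hb hi.1, ?_⟩
  rw [adinkraFlip, Nat.add_sub_cancel, ← Nat.even_count_true_bits_xor_two_pow_iff _ b,
    Nat.xor_assoc, Nat.xor_self, Nat.xor_zero]
  exact hi.2

/-- For any fixed k ≥ 3, {m_1(i) : i ∈ S_o} = {m_k(i) : i ∈ S_e}. -/
theorem stmt5 (k : ℕ) (hk : 3 ≤ k) :
    {x : ℤ | ∃ i, adinkraSo i ∧ x = adinkraM1 i} =
      {x : ℤ | ∃ i, adinkraSe i ∧ x = adinkraMbit k i} := by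
  have hb : k - 2 ≠ 0 := by omega
  ext x
  constructor
  · rintro ⟨i, hi, rfl⟩
    refine ⟨adinkraFlip (k - 2) i, adinkraSe_adinkraFlip hb hi, ?_⟩
    rw [← adinkraM1_adinkraFlip k (odd_adinkraFlip hb hi.1).pos,
      adinkraFlip_adinkraFlip hi.1.pos]
  · rintro ⟨i, hi, rfl⟩
    exact ⟨adinkraFlip (k - 2) i, adinkraSo_adinkraFlip hb hi,
      (adinkraM1_adinkraFlip k hi.1.pos).symm⟩
end

section
/- The vertices of the N-dimensional hypercube graph (vertex set 𝔽₂^N, edges between vectors differing in one coordinate, edge labeled by the coordinate in which they differ, vertices 2-colored by parity of weight) admit a labeling of the 2^(N-1) even-weight (white) vertices by 1_w,...,m_w and the 2^(N-1) odd-weight (black) vertices by 1_b,...,m_b (m = 2^(N-1)) such that: i_w is joined to i_b by the edge of color 1, and for each k with 2 ≤ k ≤ N, i_w is joined by the edge of color k to (i + 2^(k-2))_b if i mod 2^(k-1) ∈ [1, 2^(k-2)], and to (i - 2^(k-2))_b otherwise. Moreover, any white vertex may be chosen as 1_w. -/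
/-- Two vertices of the hypercube 𝔽₂^N are joined by an edge of color c
(1-indexed color c corresponds to coordinate c-1) iff they differ exactly in
that coordinate. -/
def cubeAdj (N : ℕ) (c : Fin N) (x y : Fin N → ZMod 2) : Prop :=
  x c ≠ y c ∧ ∀ j : Fin N, j ≠ c → x j = y j

/-- Hamming weight of a vertex of 𝔽₂^N. -/
def cubeWeight (N : ℕ) (x : Fin N → ZMod 2) : ℕ :=
  (Finset.univ.filter fun j => x j ≠ 0).card

/-! Let `parityCode M n ∈ 𝔽₂^(M+1)` carry the binary digits of `n < 2^M` in the colours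
`2, …, M + 1` and their parity in colour `1`, so that it has even weight. Label white vertex `i`
by `v₀ + parityCode M (i - 1)` and black vertex `i` by the same vector with colour `1` flipped.
The condition on `i mod 2^(k-1)` says exactly that digit `k - 2` of `i - 1` is `0`, so
`i ± 2^(k-2) - 1` is `i - 1` with that digit flipped; this changes the code in colours `1` and `k`,
hence black vertex `i ± 2^(k-2)` is white vertex `i` with colour `k` flipped. -/

open Finset

theorem cast_cubeWeight (N : ℕ) (x : Fin N → ZMod 2) : (cubeWeight N x : ZMod 2) = ∑ j, x j := by
  rw [cubeWeight, card_eq_sum_ones, Nat.cast_sum, sum_filter, Nat.cast_one]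
  refine sum_congr rfl fun j _ => ?_
  generalize x j = a
  fin_cases a <;> rfl

theorem even_cubeWeight_iff {N : ℕ} {x : Fin N → ZMod 2} :
    Even (cubeWeight N x) ↔ ∑ j, x j = 0 := by
  rw [← ZMod.natCast_eq_zero_iff_even, cast_cubeWeight]

theorem odd_cubeWeight_iff {N : ℕ} {x : Fin N → ZMod 2} :
    Odd (cubeWeight N x) ↔ ∑ j, x j = 1 := by
  rw [← ZMod.natCast_eq_one_iff_odd, cast_cubeWeight]

theorem cubeAdj_add_single (N : ℕ) (c : Fin N) (x : Fin N → ZMod 2) :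
    cubeAdj N c x (x + Pi.single c 1) :=
  ⟨by simp, fun j hj => by simp [hj]⟩

namespace Nat

theorem xor_two_pow_of_testBit_eq_false {n j : ℕ} (h : n.testBit j = false) :
    n ^^^ 2 ^ j = n + 2 ^ j := by
  have hq : Even (n / 2 ^ j) := by
    rw [even_iff]
    simpa [testBit_eq_decide_div_mod_eq] using h
  have hdiv : (n ^^^ 2 ^ j) / 2 ^ j = n / 2 ^ j + 1 := by
    rw [xor_div_two_pow, Nat.div_self (Nat.two_pow_pos j), xor_one_of_even hq]
  have hmod : (n ^^^ 2 ^ j) % 2 ^ j = n % 2 ^ j := by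
    rw [xor_mod_two_pow, Nat.mod_self, xor_zero]
  rw [← div_add_mod (n ^^^ 2 ^ j) (2 ^ j), hdiv, hmod, Nat.mul_add_one, Nat.add_right_comm,
    div_add_mod]

theorem xor_two_pow_of_testBit_eq_true {n j : ℕ} (h : n.testBit j = true) :
    n ^^^ 2 ^ j = n - 2 ^ j := by
  have hflip : (n ^^^ 2 ^ j).testBit j = false := by simp [h]
  have := xor_two_pow_of_testBit_eq_false hflip
  rw [Nat.xor_assoc, Nat.xor_self, xor_zero] at this
  omega

theorem succ_mod_two_pow_succ_mem_Icc_iff (n j : ℕ) :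
    (n + 1) % 2 ^ (j + 1) ∈ Set.Icc 1 (2 ^ j) ↔ n.testBit j = false := by
  set r := n % 2 ^ (j + 1)
  have hr : r < 2 ^ (j + 1) := mod_lt _ (Nat.two_pow_pos _)
  have hpow : 2 ^ (j + 1) = 2 * 2 ^ j := Nat.pow_succ'
  have hbit : n.testBit j = true ↔ 2 ^ j ≤ r := by
    have : r.testBit j = n.testBit j := by simp [r, testBit_mod_two_pow]
    rw [← this]
    exact ⟨ge_two_pow_of_testBit, fun h => testBit_of_two_pow_le_and_two_pow_add_one_gt h hr⟩
  have hsucc : (n + 1) % 2 ^ (j + 1) = (r + 1) % 2 ^ (j + 1) := (mod_add_mod _ _ _).symm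
  rw [← Bool.not_eq_true, hbit, hsucc, Set.mem_Icc]
  rcases (show r + 1 < 2 ^ (j + 1) ∨ r + 1 = 2 ^ (j + 1) by omega) with h | h
  · rw [mod_eq_of_lt h]; omega
  · rw [h, Nat.mod_self]; omega

end Nat

def binaryDigits (M n : ℕ) : Fin M → ZMod 2 := fun t => if n.testBit t then 1 else 0

def parityCode (M n : ℕ) : Fin (M + 1) → ZMod 2 :=
  Fin.cons (∑ t, binaryDigits M n t) (binaryDigits M n)

theorem binaryDigits_injOn (M : ℕ) : Set.InjOn (binaryDigits M) (Set.Iio (2 ^ M)) := by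
  intro n hn n' hn' h
  refine Nat.eq_of_testBit_eq fun t => ?_
  by_cases ht : t < M
  · have := congrFun h ⟨t, ht⟩
    simp only [binaryDigits] at this
    cases hb : n.testBit t <;> cases hb' : n'.testBit t <;> simp [hb, hb'] at this ⊢
  · have hpow : 2 ^ M ≤ 2 ^ t := Nat.pow_le_pow_right two_pos (by omega)
    rw [Set.mem_Iio] at hn hn'
    rw [Nat.testBit_lt_two_pow (by omega), Nat.testBit_lt_two_pow (by omega)]

theorem binaryDigits_xor_two_pow (M n : ℕ) (j : Fin M) :
    binaryDigits M (n ^^^ 2 ^ (j : ℕ)) = binaryDigits M n + Pi.single j 1 := by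
  funext t
  simp only [binaryDigits, Nat.testBit_xor, Nat.testBit_two_pow, Pi.add_apply, Pi.single_apply,
    ← Fin.val_inj, eq_comm (a := (t : ℕ))]
  cases n.testBit t <;> by_cases h : (j : ℕ) = t <;> simp [h, CharTwo.add_self_eq_zero]

theorem parityCode_zero (M : ℕ) : parityCode M 0 = 0 := by
  funext i
  refine Fin.cases ?_ (fun t => ?_) i <;> simp [parityCode, binaryDigits]

theorem sum_parityCode (M n : ℕ) : ∑ j, parityCode M n j = 0 := by
  rw [Fin.sum_univ_succ]
  exact CharTwo.add_self_eq_zero _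

theorem parityCode_pred_injOn (M : ℕ) :
    Set.InjOn (fun i => parityCode M (i - 1)) (Set.Icc 1 (2 ^ M)) := by
  intro i hi i' hi' h
  have := binaryDigits_injOn M (show i - 1 < 2 ^ M by grind) (show i' - 1 < 2 ^ M by grind)
    (by simpa [parityCode] using congrArg Fin.tail h)
  grind

theorem parityCode_xor_two_pow (M n : ℕ) (j : Fin M) :
    parityCode M (n ^^^ 2 ^ (j : ℕ)) = parityCode M n + Pi.single 0 1 + Pi.single j.succ 1 := by
  funext i
  refine Fin.cases ?_ (fun t => ?_) i
  · simp [parityCode, binaryDigits_xor_two_pow, sum_add_distrib]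
  · simp [parityCode, binaryDigits_xor_two_pow, Pi.single_apply]

theorem cubeAdj_parityCode_xor_two_pow (M n : ℕ) (v0 : Fin (M + 1) → ZMod 2) (j : Fin M) :
    cubeAdj (M + 1) j.succ (v0 + parityCode M n)
      (v0 + parityCode M (n ^^^ 2 ^ (j : ℕ)) + Pi.single 0 1) := by
  convert cubeAdj_add_single (M + 1) j.succ (v0 + parityCode M n) using 1
  rw [parityCode_xor_two_pow]
  linear_combination CharTwo.add_self_eq_zero (Pi.single 0 1 : Fin (M + 1) → ZMod 2)

/-- Proposition: labeling of the N-cube.  The white (even-weight) vertices and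
black (odd-weight) vertices can be labeled by 1,…,2^(N-1) such that i_w is
joined to i_b by color 1, and for 2 ≤ k ≤ N, i_w is joined by color k to
(i+2^(k-2))_b if i mod 2^(k-1) ∈ [1,2^(k-2)] and to (i-2^(k-2))_b otherwise;
moreover any white vertex may be chosen as 1_w. -/
theorem stmt6 (N : ℕ) (hN : 1 ≤ N) (v0 : Fin N → ZMod 2)
    (hv0 : Even (cubeWeight N v0)) :
    ∃ w b : ℕ → (Fin N → ZMod 2),
      Set.InjOn w (Set.Icc 1 (2 ^ (N - 1))) ∧
      Set.InjOn b (Set.Icc 1 (2 ^ (N - 1))) ∧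
      (∀ i ∈ Set.Icc 1 (2 ^ (N - 1)), Even (cubeWeight N (w i))) ∧
      (∀ i ∈ Set.Icc 1 (2 ^ (N - 1)), Odd (cubeWeight N (b i))) ∧
      w 1 = v0 ∧
      (∀ i ∈ Set.Icc 1 (2 ^ (N - 1)),
        cubeAdj N ⟨0, by omega⟩ (w i) (b i)) ∧
      (∀ k, 2 ≤ k → (hkN : k ≤ N) → ∀ i ∈ Set.Icc 1 (2 ^ (N - 1)),
        if 1 ≤ i % 2 ^ (k - 1) ∧ i % 2 ^ (k - 1) ≤ 2 ^ (k - 2) then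
          cubeAdj N ⟨k - 1, by omega⟩ (w i) (b (i + 2 ^ (k - 2)))
        else
          cubeAdj N ⟨k - 1, by omega⟩ (w i) (b (i - 2 ^ (k - 2)))) := by
  obtain ⟨M, rfl⟩ : ∃ M, N = M + 1 := ⟨N - 1, by omega⟩
  rw [even_cubeWeight_iff] at hv0
  refine ⟨fun i => v0 + parityCode M (i - 1), fun i => v0 + parityCode M (i - 1) + Pi.single 0 1,
    fun i hi i' hi' h => parityCode_pred_injOn M hi hi' (add_left_cancel h),
    fun i hi i' hi' h => parityCode_pred_injOn M hi hi' (add_left_cancel (add_right_cancel h)),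
    fun i _ => ?_, fun i _ => ?_, by simp [parityCode_zero],
    fun i _ => cubeAdj_add_single _ _ _, fun k hk hkN i hi => ?_⟩
  · simp [even_cubeWeight_iff, sum_add_distrib, hv0, sum_parityCode]
  · simp [odd_cubeWeight_iff, sum_add_distrib, hv0, sum_parityCode]
  obtain ⟨j, rfl⟩ : ∃ j, k = j + 2 := ⟨k - 2, by omega⟩
  obtain ⟨n, rfl⟩ : ∃ n, i = n + 1 := ⟨i - 1, by grind⟩
  have key := cubeAdj_parityCode_xor_two_pow M n v0 ⟨j, by omega⟩
  simp only [show j + 2 - 1 = j + 1 by omega, show j + 2 - 2 = j by omega, ← Set.mem_Icc,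
    Nat.succ_mod_two_pow_succ_mem_Icc_iff]
  split_ifs with hbit
  · rw [Nat.xor_two_pow_of_testBit_eq_false hbit] at key
    simpa [Nat.add_right_comm] using key
  · have hbit : n.testBit j = true := by simpa using hbit
    rw [Nat.xor_two_pow_of_testBit_eq_true hbit] at key
    have hidx : n + 1 - 2 ^ j - 1 = n - 2 ^ j := by
      have := Nat.ge_two_pow_of_testBit hbit
      omega
    simpa [hidx] using key
end

section
/- For a finite 2-dimensional triangulated closed surface M with a function h on vertices taking distinct values on adjacent vertices, the Euler characteristic satisfies χ(M) = (number of minima) + (number of maxima) − Σ over saddle points of their multiplicities, where a vertex v is a minimum if its lower link is empty, a maximum if its upper link is empty, and a saddle of multiplicity m ≥ 1 if its link contains exactly 2 + 2m mixed edges. -/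
set_option linter.unusedSectionVars false

lemma modeq_cancel {m i j : ℕ} (hm : 3 ≤ m) (h1 : i ≡ j + 1 [MOD m]) (h2 : i + 1 ≡ j [MOD m]) :
    False := by
  have h3 : j ≡ j + 2 [MOD m] := by
    calc j ≡ i + 1 [MOD m] := h2.symm
    _ ≡ (j + 1) + 1 [MOD m] := h1.add_right 1
  have := h3.dvd
  have h4 : (m : ℤ) ∣ 2 := by
    have : ((j : ℤ) + 2) - j = 2 := by ring
    simpa [this] using h3.dvd
  have h5 : (m : ℕ) ∣ 2 := by exact_mod_cast h4
  have := Nat.le_of_dvd (by norm_num) h5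
  omega

section Banchoff
variable {V : Type} [DecidableEq V]

def edgeAt (lk : V → ℕ → V) (v : V) (i : ℕ) : Finset V := {v, lk v i}
def triAt (lk : V → ℕ → V) (v : V) (i : ℕ) : Finset V := {v, lk v i, lk v (i + 1)}

variable {n : V → ℕ} {lk : V → ℕ → V}
variable (hn : ∀ v, 3 ≤ n v) (hper : ∀ v i, lk v (i + n v) = lk v i)
  (hinj : ∀ v, Set.InjOn (lk v) (Set.Iio (n v)))
  (hnotself : ∀ v i, lk v i ≠ v)
include hn hper hinj hnotself

lemma lk_mod (v : V) : ∀ i, lk v i = lk v (i % n v) := by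
  intro i
  induction i using Nat.strong_induction_on with
  | _ i ih =>
    rcases lt_or_ge i (n v) with hlt | hge
    · rw [Nat.mod_eq_of_lt hlt]
    · obtain ⟨j, rfl⟩ : ∃ j, i = j + n v := ⟨i - n v, by omega⟩
      rw [hper, Nat.add_mod_right, ih j (by have := hn v; omega)]

lemma lk_congr {v : V} {i j : ℕ} (hij : i ≡ j [MOD n v]) : lk v i = lk v j := by
  rw [lk_mod hn hper hinj hnotself v i, lk_mod hn hper hinj hnotself v j, hij]

lemma lk_eq_iff {v : V} {i j : ℕ} : lk v i = lk v j ↔ i ≡ j [MOD n v] := by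
  constructor
  · intro hij
    rw [lk_mod hn hper hinj hnotself v i, lk_mod hn hper hinj hnotself v j] at hij
    exact hinj v (Set.mem_Iio.2 (Nat.mod_lt _ (by have := hn v; omega)))
      (Set.mem_Iio.2 (Nat.mod_lt _ (by have := hn v; omega))) hij
  · exact lk_congr hn hper hinj hnotself

lemma edge_injOn (v : V) : Set.InjOn (edgeAt lk v) (Finset.range (n v) : Set ℕ) := by
  intro i hi j hj hij
  simp only [Finset.coe_range, Set.mem_Iio] at hi hj
  have h1 : lk v i ∈ ({v, lk v j} : Finset V) := by
    rw [show ({v, lk v j} : Finset V) = edgeAt lk v j from rfl, ← hij]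
    simp [edgeAt]
  simp only [Finset.mem_insert, Finset.mem_singleton] at h1
  rcases h1 with h1 | h1
  · exact absurd h1 (hnotself v i)
  · exact hinj v (Set.mem_Iio.2 hi) (Set.mem_Iio.2 hj) h1

lemma mem_triAt {v : V} {w : V} {k l : ℕ} (hkl : triAt lk v k = triAt lk v l)
    (hw : w ∈ ({v, lk v k, lk v (k+1)} : Finset V)) :
    w ∈ ({v, lk v l, lk v (l+1)} : Finset V) := by
  rw [show ({v, lk v l, lk v (l+1)} : Finset V) = triAt lk v l from rfl, ← hkl]
  exact hw

lemma tri_injOn (v : V) : Set.InjOn (triAt lk v) (Finset.range (n v) : Set ℕ) := by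
  intro i hi j hj hij
  simp only [Finset.coe_range, Set.mem_Iio] at hi hj
  have hia : i ≡ i [MOD n v] := Nat.ModEq.refl i
  have h1 : lk v i ∈ ({v, lk v j, lk v (j+1)} : Finset V) :=
    mem_triAt hn hper hinj hnotself hij (by simp)
  have h2 : lk v (i+1) ∈ ({v, lk v j, lk v (j+1)} : Finset V) :=
    mem_triAt hn hper hinj hnotself hij (by simp)
  simp only [Finset.mem_insert, Finset.mem_singleton] at h1 h2
  have heq : ∀ {a b : ℕ}, lk v a = lk v b → a ≡ b [MOD n v] :=
    fun hab => (lk_eq_iff hn hper hinj hnotself).1 hab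
  have hmodeq : ∀ {a b : ℕ}, a < n v → b < n v → a ≡ b [MOD n v] → a = b := by
    intro a b ha hb hab
    rwa [Nat.ModEq, Nat.mod_eq_of_lt ha, Nat.mod_eq_of_lt hb] at hab
  rcases h1 with h1 | h1 | h1
  · exact absurd h1 (hnotself v i)
  · exact hmodeq hi hj (heq h1)
  · rcases h2 with h2 | h2 | h2
    · exact absurd h2 (hnotself v (i+1))
    · exact absurd (modeq_cancel (hn v) (heq h1) (heq h2)) (fun x => x)
    · have := (heq h2).add_right_cancel' 1
      exact hmodeq hi hj this

end Banchoff

lemma double_count {α W : Type} [DecidableEq α] [Fintype W] (g : W → Finset α) (S : Finset α)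
    (hS : ∀ v, g v ⊆ S) :
    ∑ v, (g v).card = ∑ e ∈ S, (Finset.univ.filter fun v => e ∈ g v).card := by
  have h1 : ∀ v, (g v).card = ∑ e ∈ S, if e ∈ g v then 1 else 0 := by
    intro v
    rw [← Finset.card_filter, Finset.filter_mem_eq_inter, Finset.inter_eq_right.2 (hS v)]
  simp only [h1]
  rw [Finset.sum_comm]
  exact Finset.sum_congr rfl fun e _ => (Finset.card_filter _ _).symm

section Banchoff2
variable {V : Type} [DecidableEq V] [Fintype V]
variable {n : V → ℕ} {lk : V → ℕ → V}
variable (hn : ∀ v, 3 ≤ n v) (hper : ∀ v i, lk v (i + n v) = lk v i)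
  (hinj : ∀ v, Set.InjOn (lk v) (Set.Iio (n v)))
  (hnotself : ∀ v i, lk v i ≠ v)
  (hsym : ∀ v i, ∃ j < n (lk v i), lk (lk v i) j = v)
  (htri : ∀ v i, ∃ j, lk (lk v i) j = lk v (i + 1) ∧ lk (lk v i) (j + 1) = v)
include hn hper hinj hnotself

lemma perm3 {a b c : V} : ({a, b, c} : Finset V) = ({c, a, b} : Finset V) := by
  ext x; simp only [Finset.mem_insert, Finset.mem_singleton]; tauto

lemma edge_card (v : V) (i : ℕ) : (edgeAt lk v i).card = 2 :=
  Finset.card_pair (Ne.symm (hnotself v i))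

lemma tri_card (v : V) (i : ℕ) : (triAt lk v i).card = 3 := by
  have hab : lk v i ≠ lk v (i+1) := by
    intro hcon
    have := (lk_eq_iff hn hper hinj hnotself).1 hcon
    have h4 : (n v : ℤ) ∣ 1 := by
      have : ((i : ℤ) + 1) - i = 1 := by ring
      simpa [this] using this ▸ Nat.ModEq.dvd ‹i ≡ i + 1 [MOD n v]›
    have h5 : (n v : ℕ) ∣ 1 := by exact_mod_cast h4
    have := Nat.le_of_dvd (by norm_num) h5
    have := hn v; omega
  rw [triAt, Finset.card_insert_of_notMem (by
    simp only [Finset.mem_insert, Finset.mem_singleton]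
    push_neg
    exact ⟨Ne.symm (hnotself v i), Ne.symm (hnotself v (i+1))⟩)]
  rw [Finset.card_pair hab]

include hsym in
lemma edge_gen {e : Finset V}
    (he : e ∈ Finset.univ.biUnion fun v => (Finset.range (n v)).image (edgeAt lk v)) :
    (Finset.univ.filter fun w => e ∈ (Finset.range (n w)).image (edgeAt lk w)) = e := by
  simp only [Finset.mem_biUnion, Finset.mem_univ, true_and] at he
  obtain ⟨v, hv⟩ := he
  simp only [Finset.mem_image, Finset.mem_range] at hv
  obtain ⟨i, hi, rfl⟩ := hv
  ext w
  simp only [Finset.mem_filter, Finset.mem_univ, true_and, Finset.mem_image, Finset.mem_range]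
  constructor
  · rintro ⟨k, hk, hke⟩
    rw [← hke]; simp [edgeAt]
  · intro hw
    rw [edgeAt, Finset.mem_insert, Finset.mem_singleton] at hw
    rcases hw with rfl | rfl
    · exact ⟨i, hi, rfl⟩
    · obtain ⟨j, hj, hjv⟩ := hsym v i
      exact ⟨j, hj, by rw [edgeAt, hjv, edgeAt, Finset.pair_comm]⟩

include htri in
lemma tri_gen {T : Finset V}
    (hT : T ∈ Finset.univ.biUnion fun v => (Finset.range (n v)).image (triAt lk v)) :
    (Finset.univ.filter fun w => T ∈ (Finset.range (n w)).image (triAt lk w)) = T := by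
  simp only [Finset.mem_biUnion, Finset.mem_univ, true_and] at hT
  obtain ⟨v, hv⟩ := hT
  simp only [Finset.mem_image, Finset.mem_range] at hv
  obtain ⟨i, hi, rfl⟩ := hv
  ext w
  simp only [Finset.mem_filter, Finset.mem_univ, true_and, Finset.mem_image, Finset.mem_range]
  constructor
  · rintro ⟨k, hk, hke⟩
    rw [← hke]; simp [triAt]
  · intro hw
    rw [triAt, Finset.mem_insert, Finset.mem_insert, Finset.mem_singleton] at hw
    obtain ⟨j, hj1, hj2⟩ := htri v i
    rcases hw with rfl | rfl | rfl
    · exact ⟨i, hi, rfl⟩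
    · set a := lk v i with ha
      refine ⟨j % n a, Nat.mod_lt _ (by have := hn a; omega), ?_⟩
      have e1 : lk a (j % n a) = lk v (i+1) := by
        rw [← lk_mod hn hper hinj hnotself a j, hj1]
      have e2 : lk a (j % n a + 1) = v := by
        rw [lk_congr hn hper hinj hnotself ((Nat.mod_modEq j (n a)).add_right 1), hj2]
      simp only [triAt, e1, e2]
      ext x; simp only [Finset.mem_insert, Finset.mem_singleton]; tauto
    · obtain ⟨k, hk1, hk2⟩ := htri (lk v i) j
      rw [hj1] at hk1 hk2
      rw [hj2] at hk1
      set b := lk v (i+1) with hb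
      refine ⟨k % n b, Nat.mod_lt _ (by have := hn b; omega), ?_⟩
      have e1 : lk b (k % n b) = v := by
        rw [← lk_mod hn hper hinj hnotself b k, hk1]
      have e2 : lk b (k % n b + 1) = lk v i := by
        rw [lk_congr hn hper hinj hnotself ((Nat.mod_modEq k (n b)).add_right 1), hk2]
      simp only [triAt, e1, e2]
      ext x; simp only [Finset.mem_insert, Finset.mem_singleton]; tauto

end Banchoff2

section Banchoff3
variable {V : Type} [DecidableEq V] [Fintype V]
variable {n : V → ℕ} {lk : V → ℕ → V}
variable (hn : ∀ v, 3 ≤ n v) (hper : ∀ v i, lk v (i + n v) = lk v i)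
  (hinj : ∀ v, Set.InjOn (lk v) (Set.Iio (n v)))
  (hnotself : ∀ v i, lk v i ≠ v)
  (hsym : ∀ v i, ∃ j < n (lk v i), lk (lk v i) j = v)
  (htri : ∀ v i, ∃ j, lk (lk v i) j = lk v (i + 1) ∧ lk (lk v i) (j + 1) = v)
include hn hper hinj hnotself

include hsym in
lemma two_E : ∑ v, n v =
    2 * (Finset.univ.biUnion fun v => (Finset.range (n v)).image (edgeAt lk v)).card := by
  have h1 : ∀ v : V, ((Finset.range (n v)).image (edgeAt lk v)).card = n v := by
    intro v
    rw [Finset.card_image_of_injOn (edge_injOn hn hper hinj hnotself v), Finset.card_range]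
  calc ∑ v, n v = ∑ v, ((Finset.range (n v)).image (edgeAt lk v)).card := by simp [h1]
  _ = ∑ e ∈ (Finset.univ.biUnion fun v => (Finset.range (n v)).image (edgeAt lk v)),
        (Finset.univ.filter fun w => e ∈ (Finset.range (n w)).image (edgeAt lk w)).card :=
      double_count _ _ (fun v => Finset.subset_biUnion_of_mem
        (fun v => (Finset.range (n v)).image (edgeAt lk v)) (Finset.mem_univ v))
  _ = ∑ e ∈ (Finset.univ.biUnion fun v => (Finset.range (n v)).image (edgeAt lk v)), 2 := by
      refine Finset.sum_congr rfl fun e he => ?_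
      rw [edge_gen hn hper hinj hnotself hsym he]
      simp only [Finset.mem_biUnion, Finset.mem_univ, true_and, Finset.mem_image] at he
      obtain ⟨v, i, hi, rfl⟩ := he
      exact edge_card hn hper hinj hnotself v i
  _ = _ := by rw [Finset.sum_const, smul_eq_mul, mul_comm]

include htri in
lemma three_F : ∑ v, n v =
    3 * (Finset.univ.biUnion fun v => (Finset.range (n v)).image (triAt lk v)).card := by
  have h1 : ∀ v : V, ((Finset.range (n v)).image (triAt lk v)).card = n v := by
    intro v
    rw [Finset.card_image_of_injOn (tri_injOn hn hper hinj hnotself v), Finset.card_range]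
  calc ∑ v, n v = ∑ v, ((Finset.range (n v)).image (triAt lk v)).card := by simp [h1]
  _ = ∑ T ∈ (Finset.univ.biUnion fun v => (Finset.range (n v)).image (triAt lk v)),
        (Finset.univ.filter fun w => T ∈ (Finset.range (n w)).image (triAt lk w)).card :=
      double_count _ _ (fun v => Finset.subset_biUnion_of_mem
        (fun v => (Finset.range (n v)).image (triAt lk v)) (Finset.mem_univ v))
  _ = ∑ T ∈ (Finset.univ.biUnion fun v => (Finset.range (n v)).image (triAt lk v)), 3 := by
      refine Finset.sum_congr rfl fun T hT => ?_
      rw [tri_gen hn hper hinj hnotself htri hT]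
      simp only [Finset.mem_biUnion, Finset.mem_univ, true_and, Finset.mem_image] at hT
      obtain ⟨v, i, hi, rfl⟩ := hT
      exact tri_card hn hper hinj hnotself v i
  _ = _ := by rw [Finset.sum_const, smul_eq_mul, mul_comm]

omit hn hper hinj hnotself in
lemma parity_even (h : V → ℤ) (v : V) (hn1 : 1 ≤ n v) (hcyc : lk v (n v) = lk v 0) :
    2 ∣ ((Finset.range (n v)).filter fun i =>
      decide (h (lk v i) < h v) ≠ decide (h (lk v (i + 1)) < h v)).card := by
  set b : ℕ → ℤ := fun i => if h (lk v i) < h v then 1 else 0 with hb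
  have htel : ∑ i ∈ Finset.range (n v), (b (i+1) - b i) = b (n v) - b 0 :=
    Finset.sum_range_sub b (n v)
  have hbn : b (n v) = b 0 := by simp only [hb, hcyc]
  have key : ∀ i, (2:ℤ) ∣ ((if decide (h (lk v i) < h v) ≠ decide (h (lk v (i + 1)) < h v)
      then (1:ℤ) else 0) - (b (i+1) - b i)) := by
    intro i
    by_cases hA : h (lk v i) < h v <;> by_cases hB : h (lk v (i+1)) < h v <;>
      simp [hb, hA, hB] <;> decide
  have h2 : (2:ℤ) ∣ ∑ i ∈ Finset.range (n v),
      ((if decide (h (lk v i) < h v) ≠ decide (h (lk v (i + 1)) < h v) then (1:ℤ) else 0)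
        - (b (i+1) - b i)) := Finset.dvd_sum fun i _ => key i
  rw [Finset.sum_sub_distrib, htel, hbn, sub_self, sub_zero] at h2
  have h3 : (((Finset.range (n v)).filter fun i =>
      decide (h (lk v i) < h v) ≠ decide (h (lk v (i + 1)) < h v)).card : ℤ)
      = ∑ i ∈ Finset.range (n v),
        (if decide (h (lk v i) < h v) ≠ decide (h (lk v (i + 1)) < h v) then (1:ℤ) else 0) := by
    rw [Finset.card_filter]; push_cast; rfl
  rw [← h3] at h2
  exact_mod_cast h2

end Banchoff3


lemma median_char {V : Type} [DecidableEq V] (h : V → ℤ) (S : Finset V) (v a b : V)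
    (hS : S = {v, a, b}) (c1 : h a < h v) (c2 : h v < h b)
    (P : V → Prop)
    (hP : ∀ w, P w ↔ w ∈ S ∧ (∃ x ∈ S, h x < h w) ∧ (∃ y ∈ S, h w < h y)) :
    ∀ w, P w ↔ w = v := by
  intro w
  rw [hP, hS]
  simp only [Finset.mem_insert, Finset.mem_singleton]
  constructor
  · rintro ⟨hw, ⟨x, hx, hxlt⟩, ⟨y, hy, hylt⟩⟩
    rcases hw with rfl | rfl | rfl <;> rcases hx with rfl | rfl | rfl <;>
      rcases hy with rfl | rfl | rfl <;> first | rfl | omega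
  · rintro rfl
    exact ⟨Or.inl rfl, ⟨a, Or.inr (Or.inl rfl), c1⟩, ⟨b, Or.inr (Or.inr rfl), c2⟩⟩

lemma median_card {V : Type} [DecidableEq V] [Fintype V] (h : V → ℤ) (v a b : V)
    (h1 : h a ≠ h v) (h2 : h b ≠ h v) (h3 : h a ≠ h b)
    (P : V → Prop) [DecidablePred P]
    (hP : ∀ w, P w ↔ w ∈ ({v, a, b} : Finset V) ∧ (∃ x ∈ ({v, a, b} : Finset V), h x < h w)
      ∧ (∃ y ∈ ({v, a, b} : Finset V), h w < h y)) :
    (Finset.univ.filter P).card = 1 := by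
  have hperm1 : ({v, a, b} : Finset V) = {b, a, v} := by
    ext t; simp only [Finset.mem_insert, Finset.mem_singleton]; tauto
  have hperm2 : ({v, a, b} : Finset V) = {a, b, v} := by
    ext t; simp only [Finset.mem_insert, Finset.mem_singleton]; tauto
  have hperm3 : ({v, a, b} : Finset V) = {a, v, b} := by
    ext t; simp only [Finset.mem_insert, Finset.mem_singleton]; tauto
  have hperm4 : ({v, a, b} : Finset V) = {b, v, a} := by
    ext t; simp only [Finset.mem_insert, Finset.mem_singleton]; tauto
  have hperm5 : ({v, a, b} : Finset V) = {v, b, a} := by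
    ext t; simp only [Finset.mem_insert, Finset.mem_singleton]; tauto
  obtain ⟨m, hm⟩ : ∃ m : V, ∀ w, P w ↔ w = m := by
    rcases lt_or_gt_of_ne h1 with c1 | c1 <;> rcases lt_or_gt_of_ne h2 with c2 | c2 <;>
      rcases lt_or_gt_of_ne h3 with c3 | c3
    · exact ⟨b, median_char h _ b a v hperm1 c3 c2 P hP⟩
    · exact ⟨a, median_char h _ a b v hperm2 c3 c1 P hP⟩
    · exact ⟨v, median_char h _ v a b rfl c1 c2 P hP⟩
    · exact ⟨v, median_char h _ v a b rfl c1 c2 P hP⟩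
    · exact ⟨v, median_char h _ v b a hperm5 c2 c1 P hP⟩
    · exact ⟨v, median_char h _ v b a hperm5 c2 c1 P hP⟩
    · exact ⟨a, median_char h _ a v b hperm3 c1 c3 P hP⟩
    · exact ⟨b, median_char h _ b v a hperm4 c2 c3 P hP⟩
  have hfil : Finset.univ.filter P = {m} := by
    ext w; simp [hm]
  rw [hfil, Finset.card_singleton]

section Banchoff4
variable {V : Type} [DecidableEq V] [Fintype V]
variable {n : V → ℕ} {lk : V → ℕ → V}
variable (hn : ∀ v, 3 ≤ n v) (hper : ∀ v i, lk v (i + n v) = lk v i)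
  (hinj : ∀ v, Set.InjOn (lk v) (Set.Iio (n v)))
  (hnotself : ∀ v i, lk v i ≠ v)
  (htri : ∀ v i, ∃ j, lk (lk v i) j = lk v (i + 1) ∧ lk (lk v i) (j + 1) = v)
include hn hper hinj hnotself htri

lemma tri_rep {T : Finset V}
    (hT : T ∈ Finset.univ.biUnion fun v => (Finset.range (n v)).image (triAt lk v))
    {w : V} (hw : w ∈ T) : ∃ k < n w, triAt lk w k = T := by
  have hg := tri_gen hn hper hinj hnotself htri hT
  have hmem : w ∈ Finset.univ.filter
      fun w => T ∈ (Finset.range (n w)).image (triAt lk w) := by rw [hg]; exact hw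
  simp only [Finset.mem_filter, Finset.mem_univ, true_and, Finset.mem_image,
    Finset.mem_range] at hmem
  obtain ⟨k, hk, hke⟩ := hmem
  exact ⟨k, hk, hke⟩

lemma mixed_gen (h : V → ℤ) (hadj : ∀ v i, h (lk v i) ≠ h v) {T : Finset V}
    (hT : T ∈ Finset.univ.biUnion fun v => (Finset.range (n v)).image (triAt lk v)) :
    (Finset.univ.filter fun w => T ∈ ((Finset.range (n w)).filter fun i =>
        decide (h (lk w i) < h w) ≠ decide (h (lk w (i + 1)) < h w)).image (triAt lk w)).card
      = 1 := by
  have hT' := hT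
  simp only [Finset.mem_biUnion, Finset.mem_univ, true_and, Finset.mem_image,
    Finset.mem_range] at hT'
  obtain ⟨v, i, hi, hTeq⟩ := hT'
  obtain ⟨j, hj1, hj2⟩ := htri v i
  have h1 : h (lk v i) ≠ h v := hadj v i
  have h2 : h (lk v (i+1)) ≠ h v := hadj v (i+1)
  have h3 : h (lk v i) ≠ h (lk v (i+1)) := by
    have hx := hadj (lk v i) j; rw [hj1] at hx; exact hx.symm
  apply median_card h v (lk v i) (lk v (i+1)) h1 h2 h3
  have hset : ({v, lk v i, lk v (i+1)} : Finset V) = T := hTeq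
  intro w
  rw [hset]
  constructor
  · intro hmem
    simp only [Finset.mem_image, Finset.mem_filter, Finset.mem_range] at hmem
    obtain ⟨k, ⟨hk, hkm⟩, hke⟩ := hmem
    have hwT : w ∈ T := by rw [← hke]; simp [triAt]
    have haT : lk w k ∈ T := by rw [← hke]; simp [triAt]
    have hbT : lk w (k+1) ∈ T := by rw [← hke]; simp [triAt]
    refine ⟨hwT, ?_⟩
    by_cases hA : h (lk w k) < h w <;> by_cases hB : h (lk w (k+1)) < h w
    · simp [hA, hB] at hkm
    · exact ⟨⟨lk w k, haT, hA⟩,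
        ⟨lk w (k+1), hbT, lt_of_le_of_ne (not_lt.mp hB) (hadj w (k+1)).symm⟩⟩
    · exact ⟨⟨lk w (k+1), hbT, hB⟩,
        ⟨lk w k, haT, lt_of_le_of_ne (not_lt.mp hA) (hadj w k).symm⟩⟩
    · simp [hA, hB] at hkm
  · rintro ⟨hwT, ⟨x, hx, hxlt⟩, ⟨y, hy, hylt⟩⟩
    obtain ⟨k, hk, hke⟩ := tri_rep hn hper hinj hnotself htri hT hwT
    refine Finset.mem_image.2 ⟨k, Finset.mem_filter.2 ⟨Finset.mem_range.2 hk, ?_⟩, hke⟩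
    have hax := hadj w k
    have hbx := hadj w (k+1)
    by_cases hA : h (lk w k) < h w <;> by_cases hB : h (lk w (k+1)) < h w
    · exfalso
      rw [← hke] at hy
      simp only [triAt, Finset.mem_insert, Finset.mem_singleton] at hy
      rcases hy with rfl | rfl | rfl <;> omega
    · simp [hA, hB]
    · simp [hA, hB]
    · exfalso
      rw [← hke] at hx
      simp only [triAt, Finset.mem_insert, Finset.mem_singleton] at hx
      rcases hx with rfl | rfl | rfl <;> omega

lemma sum_mixed (h : V → ℤ) (hadj : ∀ v i, h (lk v i) ≠ h v) :
    ∑ v, ((Finset.range (n v)).filter fun i =>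
        decide (h (lk v i) < h v) ≠ decide (h (lk v (i + 1)) < h v)).card
      = (Finset.univ.biUnion fun v => (Finset.range (n v)).image (triAt lk v)).card := by
  have hinjm : ∀ v : V, (((Finset.range (n v)).filter fun i =>
      decide (h (lk v i) < h v) ≠ decide (h (lk v (i + 1)) < h v)).image (triAt lk v)).card
      = ((Finset.range (n v)).filter fun i =>
        decide (h (lk v i) < h v) ≠ decide (h (lk v (i + 1)) < h v)).card := by
    intro v
    refine Finset.card_image_of_injOn ((tri_injOn hn hper hinj hnotself v).mono ?_)
    intro x hx
    simp only [Finset.coe_filter, Set.mem_setOf_eq, Finset.mem_range] at hx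
    simp only [Finset.coe_range, Set.mem_Iio]
    exact hx.1
  have hsub : ∀ v : V, ((Finset.range (n v)).filter fun i =>
      decide (h (lk v i) < h v) ≠ decide (h (lk v (i + 1)) < h v)).image (triAt lk v)
      ⊆ Finset.univ.biUnion fun v => (Finset.range (n v)).image (triAt lk v) := by
    intro v
    refine subset_trans (Finset.image_subset_image (Finset.filter_subset _ _)) ?_
    exact Finset.subset_biUnion_of_mem
      (fun v => (Finset.range (n v)).image (triAt lk v)) (Finset.mem_univ v)
  calc ∑ v, ((Finset.range (n v)).filter fun i =>
        decide (h (lk v i) < h v) ≠ decide (h (lk v (i + 1)) < h v)).card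
      = ∑ v, (((Finset.range (n v)).filter fun i =>
        decide (h (lk v i) < h v) ≠ decide (h (lk v (i + 1)) < h v)).image (triAt lk v)).card :=
        Finset.sum_congr rfl fun v _ => (hinjm v).symm
    _ = ∑ T ∈ (Finset.univ.biUnion fun v => (Finset.range (n v)).image (triAt lk v)),
          (Finset.univ.filter fun w => T ∈ ((Finset.range (n w)).filter fun i =>
            decide (h (lk w i) < h w) ≠ decide (h (lk w (i + 1)) < h w)).image (triAt lk w)).card :=
        double_count _ _ hsub
    _ = ∑ T ∈ (Finset.univ.biUnion fun v => (Finset.range (n v)).image (triAt lk v)), 1 :=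
        Finset.sum_congr rfl fun T hT => mixed_gen hn hper hinj hnotself htri h hadj hT
    _ = _ := by simp

end Banchoff4

/-- Banchoff's discrete critical point theorem for a triangulated closed
surface.  The surface is given by its vertex links: around each vertex v the
`n v ≥ 3` neighbours are listed cyclically by `lk v : ℕ → V` (periodic of
period `n v`, injective on one period).  Edges are the pairs {v, lk v i} and
triangles are {v, lk v i, lk v (i+1)}; links are symmetric and consistent, so
this is a closed triangulated surface.  The height `h` takes distinct values
on adjacent vertices.  A vertex is a minimum if its lower link is empty, a
maximum if its upper link is empty, and a saddle of multiplicity m if its link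
has 2+2m mixed edges (sign changes).  Then
χ(M) = V - E + F = #minima + #maxima - Σ_{saddles} multiplicity. -/
theorem stmt11 (V : Type) [Fintype V] [DecidableEq V]
    (n : V → ℕ) (hn : ∀ v, 3 ≤ n v)
    (lk : V → ℕ → V)
    (hper : ∀ v i, lk v (i + n v) = lk v i)
    (hinj : ∀ v, Set.InjOn (lk v) (Set.Iio (n v)))
    (hnotself : ∀ v i, lk v i ≠ v)
    (hsym : ∀ v i, ∃ j < n (lk v i), lk (lk v i) j = v)
    (htri : ∀ v i, ∃ j, lk (lk v i) j = lk v (i + 1) ∧ lk (lk v i) (j + 1) = v)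
    (h : V → ℤ)
    (hadj : ∀ v i, h (lk v i) ≠ h v) :
    ((Fintype.card V : ℤ)
      - (Finset.univ.biUnion fun v =>
          (Finset.range (n v)).image fun i => ({v, lk v i} : Finset V)).card
      + (Finset.univ.biUnion fun v =>
          (Finset.range (n v)).image fun i =>
            ({v, lk v i, lk v (i + 1)} : Finset V)).card)
    = ((Finset.univ.filter fun v => ∀ i ∈ Finset.range (n v), h v < h (lk v i)).card
      + (Finset.univ.filter fun v => ∀ i ∈ Finset.range (n v), h (lk v i) < h v).card
      : ℤ)
      - ∑ v ∈ Finset.univ.filter (fun v =>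
          4 ≤ ((Finset.range (n v)).filter fun i =>
            decide (h (lk v i) < h v) ≠ decide (h (lk v (i + 1)) < h v)).card),
        ((((Finset.range (n v)).filter fun i =>
            decide (h (lk v i) < h v) ≠ decide (h (lk v (i + 1)) < h v)).card : ℤ)
          - 2) / 2 := by
  classical
  have e1 : (Finset.univ.biUnion fun v =>
      (Finset.range (n v)).image fun i => ({v, lk v i} : Finset V))
      = Finset.univ.biUnion fun v => (Finset.range (n v)).image (edgeAt lk v) := rfl
  have e2 : (Finset.univ.biUnion fun v =>
      (Finset.range (n v)).image fun i => ({v, lk v i, lk v (i + 1)} : Finset V))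
      = Finset.univ.biUnion fun v => (Finset.range (n v)).image (triAt lk v) := rfl
  rw [e1, e2]
  have hE := two_E hn hper hinj hnotself hsym
  have hF := three_F hn hper hinj hnotself htri
  have hM := sum_mixed hn hper hinj hnotself htri h hadj
  set mv : V → ℕ := fun v => ((Finset.range (n v)).filter fun i =>
      decide (h (lk v i) < h v) ≠ decide (h (lk v (i + 1)) < h v)).card with hmv
  have hcyc : ∀ v : V, lk v (n v) = lk v 0 := fun v => by simpa using hper v 0
  have hEven : ∀ v : V, 2 ∣ mv v := fun v =>
    parity_even h v (by have := hn v; omega) (hcyc v)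
  -- minima have no sign changes
  have hmin0 : ∀ v : V, (∀ i ∈ Finset.range (n v), h v < h (lk v i)) → mv v = 0 := by
    intro v hv
    rw [hmv]
    simp only [Finset.card_eq_zero, Finset.filter_eq_empty_iff]
    intro i hi
    have hii : h v < h (lk v i) := hv i hi
    have hsucc : h v < h (lk v (i + 1)) := by
      rcases Nat.lt_or_ge (i + 1) (n v) with hlt | hge
      · exact hv (i + 1) (Finset.mem_range.2 hlt)
      · have hie : i + 1 = n v := by
          simp only [Finset.mem_range] at hi; omega
        rw [hie, hcyc v]
        exact hv 0 (Finset.mem_range.2 (by have := hn v; omega))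
    have q1 : ¬ (h (lk v i) < h v) := not_lt.2 hii.le
    have q2 : ¬ (h (lk v (i + 1)) < h v) := not_lt.2 hsucc.le
    simp [q1, q2]
  have hmax0 : ∀ v : V, (∀ i ∈ Finset.range (n v), h (lk v i) < h v) → mv v = 0 := by
    intro v hv
    rw [hmv]
    simp only [Finset.card_eq_zero, Finset.filter_eq_empty_iff]
    intro i hi
    have hii : h (lk v i) < h v := hv i hi
    have hsucc : h (lk v (i + 1)) < h v := by
      rcases Nat.lt_or_ge (i + 1) (n v) with hlt | hge
      · exact hv (i + 1) (Finset.mem_range.2 hlt)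
      · have hie : i + 1 = n v := by
          simp only [Finset.mem_range] at hi; omega
        rw [hie, hcyc v]
        exact hv 0 (Finset.mem_range.2 (by have := hn v; omega))
    simp [hii, hsucc]
  -- regular/saddle vertices have at least two sign changes
  have hreg : ∀ v : V, ¬ (∀ i ∈ Finset.range (n v), h v < h (lk v i)) →
      ¬ (∀ i ∈ Finset.range (n v), h (lk v i) < h v) → 2 ≤ mv v := by
    intro v hvmin hvmax
    push_neg at hvmin hvmax
    obtain ⟨i, hi, hi2⟩ := hvmin
    obtain ⟨j, hj, hj2⟩ := hvmax
    have hib : h (lk v i) < h v := lt_of_le_of_ne hi2 (hadj v i)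
    have hjb : h v < h (lk v j) := lt_of_le_of_ne hj2 (hadj v j).symm
    have hne : mv v ≠ 0 := by
      intro h0
      rw [hmv] at h0
      simp only [Finset.card_eq_zero, Finset.filter_eq_empty_iff] at h0
      have hconst : ∀ k, k < n v → ((h (lk v k) < h v) ↔ (h (lk v 0) < h v)) := by
        intro k
        induction k with
        | zero => intro _; exact Iff.rfl
        | succ k ih =>
          intro hk
          have hk' : k < n v := by omega
          have hstep := h0 (Finset.mem_range.2 hk')
          simp only [ne_eq, not_not] at hstep
          have hiff : (h (lk v k) < h v) ↔ (h (lk v (k + 1)) < h v) := by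
            constructor
            · intro hx
              by_contra hy
              simp [hx, hy] at hstep
            · intro hx
              by_contra hy
              simp [hx, hy] at hstep
          exact hiff.symm.trans (ih hk')
      have hic := hconst i (Finset.mem_range.1 hi)
      have hjc := hconst j (Finset.mem_range.1 hj)
      by_cases h0' : h (lk v 0) < h v
      · have := hjc.2; omega
      · have := hic.1 hib; omega
    have := hEven v
    omega
  have hminmax : ∀ v : V, (∀ i ∈ Finset.range (n v), h v < h (lk v i)) →
      (∀ i ∈ Finset.range (n v), h (lk v i) < h v) → False := by
    intro v hvmin hvmax
    have h0 : (0 : ℕ) ∈ Finset.range (n v) := Finset.mem_range.2 (by have := hn v; omega)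
    have := hvmin 0 h0
    have := hvmax 0 h0
    omega
  -- the per-vertex identity (multiplied by 2)
  have hkey : ∀ v : V,
      2 * ((if (∀ i ∈ Finset.range (n v), h v < h (lk v i)) then (1:ℤ) else 0)
        + (if (∀ i ∈ Finset.range (n v), h (lk v i) < h v) then (1:ℤ) else 0)
        - (if 4 ≤ mv v then ((mv v : ℤ) - 2) / 2 else 0)) = 2 - (mv v : ℤ) := by
    intro v
    by_cases hvmin : ∀ i ∈ Finset.range (n v), h v < h (lk v i) <;>
      by_cases hvmax : ∀ i ∈ Finset.range (n v), h (lk v i) < h v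
    · exact absurd (hminmax v hvmin hvmax) (fun x => x)
    · rw [hmin0 v hvmin, if_pos hvmin, if_neg hvmax,
        if_neg (by norm_num : ¬ (4:ℕ) ≤ 0)]
      norm_num
    · rw [hmax0 v hvmax, if_neg hvmin, if_pos hvmax,
        if_neg (by norm_num : ¬ (4:ℕ) ≤ 0)]
      norm_num
    · have h2 := hreg v hvmin hvmax
      have hev := hEven v
      by_cases h4 : 4 ≤ mv v
      · rw [if_pos h4, if_neg hvmin, if_neg hvmax]
        have hdvd : (2:ℤ) ∣ ((mv v : ℤ) - 2) := by
          obtain ⟨t, ht⟩ := hev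
          exact ⟨(t : ℤ) - 1, by rw [ht]; push_cast; ring⟩
        obtain ⟨u, hu⟩ := hdvd
        rw [hu, Int.mul_ediv_cancel_left _ (by norm_num)]
        omega
      · have hm2 : mv v = 2 := by omega
        rw [if_neg hvmin, if_neg hvmax, if_neg h4, hm2]
        norm_num
  -- rewrite the right-hand side as a single sum
  have hRHS : (((Finset.univ.filter fun v => ∀ i ∈ Finset.range (n v), h v < h (lk v i)).card
        + (Finset.univ.filter fun v => ∀ i ∈ Finset.range (n v), h (lk v i) < h v).card : ℕ) : ℤ)
      - ∑ v ∈ Finset.univ.filter (fun v => 4 ≤ mv v), ((mv v : ℤ) - 2) / 2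
      = ∑ v : V, ((if (∀ i ∈ Finset.range (n v), h v < h (lk v i)) then (1:ℤ) else 0)
        + (if (∀ i ∈ Finset.range (n v), h (lk v i) < h v) then (1:ℤ) else 0)
        - (if 4 ≤ mv v then ((mv v : ℤ) - 2) / 2 else 0)) := by
    rw [Finset.sum_sub_distrib, Finset.sum_add_distrib, Finset.sum_boole, Finset.sum_boole,
      ← Finset.sum_filter]
    push_cast
    ring
  -- final bookkeeping
  have hg2 : 2 * (∑ v : V, ((if (∀ i ∈ Finset.range (n v), h v < h (lk v i)) then (1:ℤ) else 0)
        + (if (∀ i ∈ Finset.range (n v), h (lk v i) < h v) then (1:ℤ) else 0)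
        - (if 4 ≤ mv v then ((mv v : ℤ) - 2) / 2 else 0)))
      = 2 * (Fintype.card V : ℤ) - ∑ v : V, (mv v : ℤ) := by
    rw [Finset.mul_sum]
    rw [Finset.sum_congr rfl fun v _ => hkey v]
    rw [Finset.sum_sub_distrib]
    simp [Finset.card_univ, mul_comm]
  have hMZ : ∑ v : V, (mv v : ℤ)
      = ((Finset.univ.biUnion fun v => (Finset.range (n v)).image (triAt lk v)).card : ℤ) := by
    rw [← Nat.cast_sum]
    exact_mod_cast congrArg (Nat.cast : ℕ → ℤ) hM
  have hEZ : 2 * ((Finset.univ.biUnion fun v =>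
      (Finset.range (n v)).image (edgeAt lk v)).card : ℤ) = ((∑ v, n v : ℕ) : ℤ) := by
    exact_mod_cast congrArg (Nat.cast : ℕ → ℤ) hE.symm
  have hFZ : 3 * ((Finset.univ.biUnion fun v =>
      (Finset.range (n v)).image (triAt lk v)).card : ℤ) = ((∑ v, n v : ℕ) : ℤ) := by
    exact_mod_cast congrArg (Nat.cast : ℕ → ℤ) hF.symm
  rw [hMZ] at hg2
  push_cast at hRHS ⊢
  rw [hRHS]
  linarith [hg2, hEZ, hFZ]
end
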